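/- Let f : A → B, g : A → C, γ : B → D, δ : C → D form a pushout square in the category of S-posets. If f is convex, then δ is convex. -/
import Mathlib


universe u v

/-- A pomonoid: the partial order is compatible with multiplication on both sides. -/
def IsPomonoid (S : Type*) [Monoid S] [PartialOrder S] : Prop :=
  ∀ ⦃a b : S⦄, a ≤ b → ∀ c : S, a * c ≤ b * c ∧ c * a ≤ c * b

/-- A right `S`-poset structure on `A` given by the action `act`. -/
structure IsRightSPoset (S A : Type*) [Monoid S] [PartialOrder S] [PartialOrder A]
    (act : A → S → A) : Prop where
  act_one : ∀ a, act a 1 = a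
  act_mul : ∀ a s t, act a (s * t) = act (act a s) t
  mono_act : ∀ {a b : A} (s : S), a ≤ b → act a s ≤ act b s
  act_mono : ∀ (a : A) {s t : S}, s ≤ t → act a s ≤ act a t

/-- A left `S`-poset structure on `A` given by the action `act`. -/
structure IsLeftSPoset (S A : Type*) [Monoid S] [PartialOrder S] [PartialOrder A]
    (act : S → A → A) : Prop where
  one_act : ∀ a, act 1 a = a
  mul_act : ∀ s t a, act (s * t) a = act s (act t a)
  mono_act : ∀ {a b : A} (s : S), a ≤ b → act s a ≤ act s b
  act_mono : ∀ (a : A) {s t : S}, s ≤ t → act s a ≤ act t a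

/-- The scheme relation defining the order on the tensor product `X ⊗_U Y`, at the level of
representatives: `TLe leX leY aX aY (x, y) (x', y')` holds precisely when there is a finite
scheme `x ≤ x₁s₁`, `s₁y ≤ t₁y₂`, `x₁t₁ ≤ x₂s₂`, `s₂y₂ ≤ t₂y₃`, …, `sₙyₙ ≤ tₙy'`,
`xₙtₙ ≤ x'`. -/
inductive TLe {U X Y : Type*} (leX : X → X → Prop) (leY : Y → Y → Prop)
    (aX : X → U → X) (aY : U → Y → Y) : X × Y → X × Y → Prop
  | base : ∀ (p q : X × Y) (x₁ : X) (s t : U),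
      leX p.1 (aX x₁ s) → leY (aY s p.2) (aY t q.2) → leX (aX x₁ t) q.1 →
      TLe leX leY aX aY p q
  | step : ∀ (p q : X × Y) (x₁ : X) (s t : U) (y₂ : Y),
      leX p.1 (aX x₁ s) → leY (aY s p.2) (aY t y₂) →
      TLe leX leY aX aY (aX x₁ t, y₂) q → TLe leX leY aX aY p q

/-- Equality of two representatives in the tensor product. -/
def TEquiv {U X Y : Type*} (leX : X → X → Prop) (leY : Y → Y → Prop)
    (aX : X → U → X) (aY : U → Y → Y) (p q : X × Y) : Prop :=
  TLe leX leY aX aY p q ∧ TLe leX leY aX aY q p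

/-- The order induced on a quotient by a relation `le` on representatives. -/
def QuotLe {α : Type*} (r : α → α → Prop) (le : α → α → Prop) (x y : Quot r) : Prop :=
  ∃ p q : α, Quot.mk r p = x ∧ Quot.mk r q = y ∧ le p q

/-- `ChainLe le ρ a b` expresses `a ≤ a₁ ρ a₁' ≤ a₂ ρ a₂' ≤ ⋯ ≤ aₙ ρ aₙ' ≤ b`. -/
inductive ChainLe {F : Type*} (le ρ : F → F → Prop) : F → F → Prop
  | base : ∀ {a b : F}, le a b → ChainLe le ρ a b
  | step : ∀ {a b : F} (d d' : F), le a d → ρ d d' → ChainLe le ρ d' b → ChainLe le ρ a b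

/-- The relation `α(R)` induced by `R` on a right `S`-act:
`a α(R) b` iff `a = b` or `a = x₁s₁`, `x₁'s₁ = x₂s₂`, …, `xₙ'sₙ = b` with `(xᵢ, xᵢ') ∈ R`. -/
inductive AlphaRel {S F : Type*} (act : F → S → F) (R : F → F → Prop) : F → F → Prop
  | refl : ∀ a, AlphaRel act R a a
  | step : ∀ (x x' : F) (s : S) (b : F), R x x' → AlphaRel act R (act x' s) b →
      AlphaRel act R (act x s) b

/-- The componentwise right `S`-action on the coproduct `B ⊕ C`. -/
def sumAct {S B C : Type*} (aB : B → S → B) (aC : C → S → C) : B ⊕ C → S → B ⊕ C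
  | Sum.inl b, s => Sum.inl (aB b s)
  | Sum.inr c, s => Sum.inr (aC c s)

/-- The symmetrized generating relation `R ∪ R⁻¹` of the pushout of `f` and `g`,
where `R = {(f a, g a) : a ∈ A}`, on the coproduct `B ⊕ C`. -/
def pushR {A B C : Type*} (f : A → B) (g : A → C) (p q : B ⊕ C) : Prop :=
  (∃ a, p = Sum.inl (f a) ∧ q = Sum.inr (g a)) ∨ (∃ a, p = Sum.inr (g a) ∧ q = Sum.inl (f a))

/-- The order `≤_{α(R ∪ R⁻¹)}` on `B ⊕ C` inducing the order of the pushout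
`D = (B ⊕ C)/ν(R ∪ R⁻¹)`: `γ(b) ≤ δ(c)` in `D` iff `pushLe aB aC f g (.inl b) (.inr c)`. -/
def pushLe {S A B C : Type*} [PartialOrder B] [PartialOrder C]
    (aB : B → S → B) (aC : C → S → C) (f : A → B) (g : A → C) : B ⊕ C → B ⊕ C → Prop :=
  ChainLe (· ≤ ·) (AlphaRel (sumAct aB aC) (pushR f g))

section Aux
set_option linter.unusedSectionVars false

lemma chainLe_of_le {F : Type*} [Preorder F] {ρ : F → F → Prop} :
    ∀ {b c : F}, ChainLe (· ≤ ·) ρ b c → ∀ {a : F}, a ≤ b → ChainLe (· ≤ ·) ρ a c := by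
  intro b c h
  induction h with
  | base hbc => exact fun hab => .base (le_trans hab hbc)
  | step d d' h1 h2 h3 ih => exact fun hab => .step d d' (le_trans hab h1) h2 h3

lemma chainLe_trans {F : Type*} [Preorder F] {ρ : F → F → Prop} {a b c : F}
    (h1 : ChainLe (· ≤ ·) ρ a b) (h2 : ChainLe (· ≤ ·) ρ b c) :
    ChainLe (· ≤ ·) ρ a c := by
  induction h1 with
  | base h => exact chainLe_of_le h2 h
  | step d d' g1 g2 g3 ih => exact .step d d' g1 g2 (ih h2)

variable {S A B C : Type u} [Monoid S] [PartialOrder S] [PartialOrder A] [PartialOrder B]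
    [PartialOrder C]
    {aA : A → S → A} {aB : B → S → B} {aC : C → S → C}
    {f : A → B} {g : A → C}

lemma pushLe_refl (x : B ⊕ C) : pushLe aB aC f g x x := .base le_rfl

lemma pushEquiv_equivalence :
    Equivalence (fun p q => pushLe aB aC f g p q ∧ pushLe aB aC f g q p) :=
  ⟨fun x => ⟨pushLe_refl x, pushLe_refl x⟩, fun h => ⟨h.2, h.1⟩,
   fun h1 h2 => ⟨chainLe_trans h1.1 h2.1, chainLe_trans h2.2 h1.2⟩⟩

/-- forward invariant: above a C-element or above the image of f -/
def Pfwd (f : A → B) (x : B ⊕ C) : Prop :=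
  (∃ c₀, x = Sum.inr c₀) ∨ ∃ b a, x = Sum.inl b ∧ f a ≤ b

/-- backward invariant -/
def Pbwd (f : A → B) (x : B ⊕ C) : Prop :=
  (∃ c₀, x = Sum.inr c₀) ∨ ∃ b a, x = Sum.inl b ∧ b ≤ f a

lemma pfwd_le {x y : B ⊕ C} (h : x ≤ y) (hx : Pfwd f x) : Pfwd f y := by
  rcases hx with ⟨c₀, rfl⟩ | ⟨b, a, rfl, hb⟩
  · cases h with
    | inr h => exact Or.inl ⟨_, rfl⟩
  · cases h with
    | inl h => exact Or.inr ⟨_, a, rfl, le_trans hb h⟩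

lemma pbwd_le {x y : B ⊕ C} (h : x ≤ y) (hy : Pbwd f y) : Pbwd f x := by
  rcases hy with ⟨c₀, rfl⟩ | ⟨b, a, rfl, hb⟩
  · cases h with
    | inr h => exact Or.inl ⟨_, rfl⟩
  · cases h with
    | inl h => exact Or.inr ⟨_, a, rfl, le_trans h hb⟩

lemma pfwd_alpha (hfe : ∀ a s, f (aA a s) = aB (f a) s)
    {d d' : B ⊕ C} (h : AlphaRel (sumAct aB aC) (pushR f g) d d')
    (hd : Pfwd f d) : Pfwd f d' := by
  induction h with
  | refl => exact hd
  | step x x' s b hR hA ih =>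
    apply ih
    rcases hR with ⟨a, _, rfl⟩ | ⟨a, _, rfl⟩
    · exact Or.inl ⟨_, rfl⟩
    · exact Or.inr ⟨aB (f a) s, aA a s, rfl, le_of_eq (hfe a s)⟩

lemma pbwd_alpha (hfe : ∀ a s, f (aA a s) = aB (f a) s)
    {d d' : B ⊕ C} (h : AlphaRel (sumAct aB aC) (pushR f g) d d')
    (hd : Pbwd f d') : Pbwd f d := by
  induction h with
  | refl => exact hd
  | step x x' s b hR hA ih =>
    rcases hR with ⟨a, rfl, _⟩ | ⟨a, rfl, _⟩
    · exact Or.inr ⟨aB (f a) s, aA a s, rfl, ge_of_eq (hfe a s)⟩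
    · exact Or.inl ⟨_, rfl⟩

lemma pfwd_pushLe (hfe : ∀ a s, f (aA a s) = aB (f a) s)
    {x y : B ⊕ C} (h : pushLe aB aC f g x y) (hx : Pfwd f x) : Pfwd f y := by
  induction h with
  | base h => exact pfwd_le h hx
  | step d d' h1 h2 h3 ih => exact ih (pfwd_alpha hfe h2 (pfwd_le h1 hx))

lemma pbwd_pushLe (hfe : ∀ a s, f (aA a s) = aB (f a) s)
    {x y : B ⊕ C} (h : pushLe aB aC f g x y) (hy : Pbwd f y) : Pbwd f x := by
  induction h with
  | base h => exact pbwd_le h hy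
  | step d d' h1 h2 h3 ih => exact pbwd_le h1 (pbwd_alpha hfe h2 (ih hy))

lemma pushLe_cross (hB1 : ∀ b, aB b 1 = b) (hC1 : ∀ c, aC c 1 = c) (a : A) :
    pushLe aB aC f g (Sum.inl (f a)) (Sum.inr (g a)) ∧
    pushLe aB aC f g (Sum.inr (g a)) (Sum.inl (f a)) := by
  constructor
  · refine .step (Sum.inl (f a)) (Sum.inr (g a)) le_rfl ?_ (.base le_rfl)
    have := AlphaRel.step (act := sumAct aB aC) (R := pushR f g)
      (Sum.inl (f a)) (Sum.inr (g a)) 1 (Sum.inr (g a))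
      (Or.inl ⟨a, rfl, rfl⟩) ?_
    · simpa [sumAct, hB1] using this
    · have : sumAct aB aC (Sum.inr (g a)) 1 = Sum.inr (g a) := by simp [sumAct, hC1]
      rw [this]; exact .refl _
  · refine .step (Sum.inr (g a)) (Sum.inl (f a)) le_rfl ?_ (.base le_rfl)
    have := AlphaRel.step (act := sumAct aB aC) (R := pushR f g)
      (Sum.inr (g a)) (Sum.inl (f a)) 1 (Sum.inl (f a))
      (Or.inr ⟨a, rfl, rfl⟩) ?_
    · simpa [sumAct, hC1] using this
    · have : sumAct aB aC (Sum.inl (f a)) 1 = Sum.inl (f a) := by simp [sumAct, hB1]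
      rw [this]; exact .refl _

end Aux

/-- if f is convex then δ : C → D is convex, where
D = (B ⊕ C)/ν(R ∪ R⁻¹) is the pushout and δ(c) is the class of .inr c. -/
theorem stmt_10 {S A B C : Type u} [Monoid S] [PartialOrder S] [PartialOrder A] [PartialOrder B]
    [PartialOrder C] (hS : IsPomonoid S)
    (aA : A → S → A) (aB : B → S → B) (aC : C → S → C)
    (hA : IsRightSPoset S A aA) (hB : IsRightSPoset S B aB) (hC : IsRightSPoset S C aC)
    (f : A → B) (g : A → C)
    (hfm : Monotone f) (hfe : ∀ a s, f (aA a s) = aB (f a) s)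
    (hgm : Monotone g) (hge : ∀ a s, g (aA a s) = aC (g a) s)
    (hfc : ∀ (a a' : A) (b' : B), f a ≤ b' → b' ≤ f a' → b' ∈ Set.range f) :
    ∀ (c c' : C)
      (d : Quot (fun p q => pushLe aB aC f g p q ∧ pushLe aB aC f g q p)),
      QuotLe (fun p q => pushLe aB aC f g p q ∧ pushLe aB aC f g q p) (pushLe aB aC f g)
        (Quot.mk _ (Sum.inr c)) d →
      QuotLe (fun p q => pushLe aB aC f g p q ∧ pushLe aB aC f g q p) (pushLe aB aC f g)
        d (Quot.mk _ (Sum.inr c')) →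
      ∃ c'' : C, d = Quot.mk _ (Sum.inr c'') := by
  intro c c' d h1 h2
  obtain ⟨p, q, hp, hq, hpq⟩ := h1
  obtain ⟨p', q', hp', hq', hpq'⟩ := h2
  set r := fun p q => pushLe aB aC f g p q ∧ pushLe aB aC f g q p with hr
  have heq : Equivalence r := pushEquiv_equivalence
  have h1 : r (Sum.inr c) p := heq.eqvGen_iff.mp (Quot.eqvGen_exact hp.symm)
  have h2 : r q p' := heq.eqvGen_iff.mp (Quot.eqvGen_exact (hq.trans hp'.symm))
  have h3 : r q' (Sum.inr c') := heq.eqvGen_iff.mp (Quot.eqvGen_exact hq')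
  have hcq : pushLe aB aC f g (Sum.inr c) q := chainLe_trans h1.1 hpq
  have hqc' : pushLe aB aC f g q (Sum.inr c') :=
    chainLe_trans h2.1 (chainLe_trans hpq' h3.1)
  have hf : Pfwd f q := pfwd_pushLe (fun a s => by rw [hfe]) hcq (Or.inl ⟨c, rfl⟩)
  have hb : Pbwd f q := pbwd_pushLe (fun a s => by rw [hfe]) hqc' (Or.inl ⟨c', rfl⟩)
  rcases hf with ⟨c₀, rfl⟩ | ⟨b, a, rfl, hab⟩
  · exact ⟨c₀, hq.symm⟩
  · rcases hb with ⟨c₀, h⟩ | ⟨b', a', hbb, hba⟩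
    · exact absurd h (by simp)
    · rw [Sum.inl.injEq] at hbb
      subst hbb
      obtain ⟨a'', ha''⟩ := hfc a a' b hab hba
      subst ha''
      have hcr := pushLe_cross (f := f) (g := g) hB.act_one hC.act_one a''
      exact ⟨g a'', hq.symm.trans (Quot.sound ⟨hcr.1, hcr.2⟩)⟩
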